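/- arXiv:1902.04233 — 3 statements merged into one kernel-verified Lean document; each statement's English description precedes it below -/
import Mathlib

section
/- Let A be a real symmetric tensor of even order k and dimension n. Then λ_min(A) = min{ A x^k : x ∈ ℝⁿ, ‖x‖_k = 1 }, where λ_min(A) is the least H-eigenvalue of A; moreover x achieves this minimum if and only if x is an H-eigenvector of A associated with λ_min(A). -/
/-
By compactness, `A x^k` attains a minimum `m` on the unit sphere `‖x‖_k = 1`, and by
homogeneity `m ∑ xᵢ^k ≤ A x^k` for every `x` (for even `k`, `∑ xᵢ^k > 0` unless `x = 0`).
Euler's identity `∑ xᵢ (A x^{k-1})ᵢ = A x^k` turns an H-eigenpair `(λ, x)` into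
`A x^k = λ ∑ xᵢ^k`, so every H-eigenvalue is at least `m`, and a unit eigenvector for `m` attains
the minimum. Conversely, a unit minimizer `x` minimizes `y ↦ A y^k - m ∑ yᵢ^k` globally; for a
symmetric tensor its gradient is `k (A x^{k-1} - m x^{[k-1]})`, which therefore vanishes, so `x`
is an H-eigenvector for `m`. In particular `m` is the least H-eigenvalue.
-/
open Finset

/-- `A x^k = ∑_{i₁,…,i_k} a_{i₁…i_k} x_{i₁} ⋯ x_{i_k}` for an order-`k`
dimension-`n` real tensor `A`. -/
def Axk {n k : ℕ} (A : (Fin k → Fin n) → ℝ) (x : Fin n → ℝ) : ℝ :=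
  ∑ f : Fin k → Fin n, A f * ∏ j : Fin k, x (f j)

/-- A tensor is symmetric if its entries are invariant under permutation of indices. -/
def TensorSymm {n k : ℕ} (A : (Fin k → Fin n) → ℝ) : Prop :=
  ∀ (σ : Equiv.Perm (Fin k)) (f : Fin k → Fin n), A (f ∘ σ) = A f

/-- `(A x^{k-1})_i = ∑_{i₂,…,i_k} a_{i i₂ … i_k} x_{i₂} ⋯ x_{i_k}`. -/
def Axk1 {n k : ℕ} [NeZero k] (A : (Fin k → Fin n) → ℝ) (x : Fin n → ℝ) (i : Fin n) : ℝ :=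
  ∑ f ∈ Finset.univ.filter (fun f : Fin k → Fin n => f 0 = i),
    A f * ∏ j ∈ Finset.univ.erase (0 : Fin k), x (f j)

/-- `(λ, x)` is an H-eigenpair of `A`: `x ∈ ℝⁿ \ {0}` and `A x^{k-1} = λ x^{[k-1]}`. -/
def IsHEigenpair {n k : ℕ} [NeZero k] (A : (Fin k → Fin n) → ℝ) (lam : ℝ)
    (x : Fin n → ℝ) : Prop :=
  x ≠ 0 ∧ ∀ i : Fin n, Axk1 A x i = lam * x i ^ (k - 1)

/-- The least H-eigenvalue of the tensor `A`. -/
noncomputable def tensorLamMin {n k : ℕ} [NeZero k] (A : (Fin k → Fin n) → ℝ) : ℝ :=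
  sInf {lam : ℝ | ∃ x : Fin n → ℝ, IsHEigenpair A lam x}

section
variable {ι : Type*} [Fintype ι] {k : ℕ}

theorem sum_pow_pos (hk : Even k) {x : ι → ℝ} (hx : x ≠ 0) : 0 < ∑ i, x i ^ k := by
  obtain ⟨i, hi⟩ := Function.ne_iff.1 hx
  exact Finset.sum_pos' (fun j _ => hk.pow_nonneg (x j)) ⟨i, Finset.mem_univ i, hk.pow_pos hi⟩

theorem hasDerivAt_sum_pow_add_smul (x v : ι → ℝ) :
    HasDerivAt (fun t : ℝ => ∑ i, (x + t • v) i ^ k) (k * ∑ i, v i * x i ^ (k - 1)) 0 := by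
  have hline (i : ι) : HasDerivAt (fun t : ℝ => (x + t • v) i) (v i) 0 := by
    simpa using ((hasDerivAt_id (0 : ℝ)).mul_const (v i)).const_add (x i)
  refine (HasDerivAt.fun_sum fun i (_ : i ∈ univ) => (hline i).pow k).congr_deriv ?_
  simp only [Finset.mul_sum, Pi.add_apply, Pi.smul_apply, smul_eq_mul, zero_mul, add_zero]
  exact Finset.sum_congr rfl fun _ _ => by ring

theorem isCompact_sum_abs_pow_eq_one (hk : k ≠ 0) :
    IsCompact {x : ι → ℝ | ∑ i, |x i| ^ k = 1} := by
  refine Metric.isCompact_of_isClosed_isBounded (isClosed_eq (by fun_prop) continuous_const)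
    ((Metric.isBounded_closedBall (x := (0 : ι → ℝ)) (r := 1)).subset ?_)
  intro x (hx : ∑ i, |x i| ^ k = 1)
  rw [Metric.mem_closedBall, dist_zero_right, pi_norm_le_iff_of_nonneg zero_le_one]
  intro i
  rw [Real.norm_eq_abs, ← pow_le_one_iff_of_nonneg (abs_nonneg _) hk, ← hx]
  exact Finset.single_le_sum (fun j _ => pow_nonneg (abs_nonneg (x j)) k) (Finset.mem_univ i)

end

section
variable {n k : ℕ} {A : (Fin k → Fin n) → ℝ}

theorem Axk_smul (A : (Fin k → Fin n) → ℝ) (c : ℝ) (x : Fin n → ℝ) :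
    Axk A (c • x) = c ^ k * Axk A x := by
  simp only [Axk, Finset.mul_sum, Pi.smul_apply, smul_eq_mul, Finset.prod_mul_distrib,
    Finset.prod_const, Finset.card_univ, Fintype.card_fin]
  exact Finset.sum_congr rfl fun _ _ => by ring

theorem continuous_Axk (A : (Fin k → Fin n) → ℝ) : Continuous (Axk A) := by
  unfold Axk; fun_prop

theorem mul_sum_pow_le_Axk (hk : Even k) (hk₀ : k ≠ 0) {m : ℝ}
    (hm : ∀ y, ∑ i, y i ^ k = 1 → m ≤ Axk A y) (x : Fin n → ℝ) :
    m * ∑ i, x i ^ k ≤ Axk A x := by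
  rcases eq_or_ne x 0 with rfl | hx
  · simp [Axk, zero_pow hk₀]
  set s := ∑ i, x i ^ k
  have hs : 0 < s := sum_pow_pos hk hx
  have hc : (s ^ (k : ℝ)⁻¹)⁻¹ ^ k = s⁻¹ := by rw [inv_pow, Real.rpow_inv_natCast_pow hs.le hk₀]
  have hunit : ∑ i, ((s ^ (k : ℝ)⁻¹)⁻¹ • x) i ^ k = 1 := by
    simp only [Pi.smul_apply, smul_eq_mul, mul_pow, ← Finset.mul_sum, hc]
    exact inv_mul_cancel₀ hs.ne'
  have hunit := hm _ hunit
  rwa [Axk_smul, hc, inv_mul_eq_div, le_div_iff₀ hs] at hunit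

variable [NeZero k]

theorem sum_mul_Axk1 (A : (Fin k → Fin n) → ℝ) (x : Fin n → ℝ) :
    ∑ i, x i * Axk1 A x i = Axk A x := by
  rw [Axk, ← Finset.sum_fiberwise _ (fun f : Fin k → Fin n => f 0)]
  refine Finset.sum_congr rfl fun i _ => ?_
  rw [Axk1, Finset.mul_sum]
  refine Finset.sum_congr rfl fun f hf => ?_
  rw [← Finset.mul_prod_erase _ _ (Finset.mem_univ 0), (Finset.mem_filter.1 hf).2]
  ring

theorem IsHEigenpair.Axk_eq {lam : ℝ} {x : Fin n → ℝ} (h : IsHEigenpair A lam x) :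
    Axk A x = lam * ∑ i, x i ^ k := by
  rw [← sum_mul_Axk1, Finset.mul_sum]
  refine Finset.sum_congr rfl fun i _ => ?_
  rw [h.2 i, ← mul_pow_sub_one (NeZero.ne k) (x i)]
  ring

theorem le_of_isHEigenpair (hk : Even k) {m lam : ℝ} {x : Fin n → ℝ}
    (hm : ∀ y, m * ∑ i, y i ^ k ≤ Axk A y) (h : IsHEigenpair A lam x) : m ≤ lam :=
  le_of_mul_le_mul_right (h.Axk_eq ▸ hm x) (sum_pow_pos hk h.1)

theorem TensorSymm.Axk1_eq_sum_filter_apply_eq (hA : TensorSymm A) (x : Fin n → ℝ) (i : Fin n)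
    (j₀ : Fin k) :
    ∑ f with f j₀ = i, A f * ∏ j ∈ univ.erase j₀, x (f j) = Axk1 A x i := by
  let σ := Equiv.swap (0 : Fin k) j₀
  have hσ : (univ.erase 0).map σ.toEmbedding = univ.erase j₀ := by
    rw [Finset.map_erase, Finset.map_univ_equiv]; simp [σ]
  refine Finset.sum_nbij' (· ∘ σ) (· ∘ σ) ?_ ?_ ?_ ?_ fun f _ => ?_
  · simp [σ]
  · simp [σ]
  · simp [σ, Function.comp_def]
  · simp [σ, Function.comp_def]
  · rw [hA, ← hσ, Finset.prod_map]
    rfl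

theorem TensorSymm.hasDerivAt_Axk_add_smul (hA : TensorSymm A) (x v : Fin n → ℝ) :
    HasDerivAt (fun t : ℝ => Axk A (x + t • v)) (k * ∑ i, v i * Axk1 A x i) 0 := by
  have hterm (f : Fin k → Fin n) : HasDerivAt (fun t : ℝ => A f * ∏ j, (x + t • v) (f j))
      (A f * ∑ j₀, (∏ j ∈ univ.erase j₀, x (f j)) * v (f j₀)) 0 := by
    have hline (j : Fin k) : HasDerivAt (fun t : ℝ => (x + t • v) (f j)) (v (f j)) 0 := by
      simpa using ((hasDerivAt_id (0 : ℝ)).mul_const (v (f j))).const_add (x (f j))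
    simpa using (HasDerivAt.fun_finsetProd fun j _ => hline j).const_mul (A f)
  have hslot (j₀ : Fin k) :
      ∑ f : Fin k → Fin n, A f * ((∏ j ∈ univ.erase j₀, x (f j)) * v (f j₀)) =
        ∑ i, v i * Axk1 A x i := by
    rw [← Finset.sum_fiberwise _ (fun f : Fin k → Fin n => f j₀)]
    refine Finset.sum_congr rfl fun i _ => ?_
    rw [← hA.Axk1_eq_sum_filter_apply_eq x i j₀, Finset.mul_sum]
    refine Finset.sum_congr rfl fun f hf => ?_
    rw [(Finset.mem_filter.1 hf).2]
    ring
  refine (HasDerivAt.fun_sum fun f (_ : f ∈ univ) => hterm f).congr_deriv ?_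
  rw [Finset.sum_congr rfl fun f _ => Finset.mul_sum _ _ _, Finset.sum_comm]
  simp [hslot]

theorem TensorSymm.Axk1_eq_of_mul_sum_pow_le (hA : TensorSymm A) {m : ℝ} {x : Fin n → ℝ}
    (hm : ∀ y, m * ∑ i, y i ^ k ≤ Axk A y) (hx : Axk A x = m * ∑ i, x i ^ k) (i : Fin n) :
    Axk1 A x i = m * x i ^ (k - 1) := by
  let v : Fin n → ℝ := Pi.single i 1
  have hmin : IsLocalMin (fun t : ℝ => Axk A (x + t • v) - m * ∑ j, (x + t • v) j ^ k) 0 :=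
    IsMinOn.isLocalMin (s := Set.univ) (fun t _ => by
      simp only [zero_smul, add_zero, hx, sub_self]
      exact sub_nonneg.2 (hm _)) Filter.univ_mem
  have hcrit := hmin.hasDerivAt_eq_zero <| (hA.hasDerivAt_Axk_add_smul x _).sub
    ((hasDerivAt_sum_pow_add_smul x _).const_mul m)
  simp only [v, Pi.single_apply, ite_mul, one_mul, zero_mul, Finset.sum_ite_eq', Finset.mem_univ,
    if_true] at hcrit
  have hk₀ : (k : ℝ) ≠ 0 := Nat.cast_ne_zero.2 (NeZero.ne k)
  exact mul_left_cancel₀ hk₀ (by linear_combination hcrit)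

end

/-- For a real symmetric tensor `A` of even order `k` and dimension `n`,
`λ_min(A) = min { A x^k : x ∈ ℝⁿ, ‖x‖_k = 1 }`, and a unit vector `x` attains this
minimum if and only if it is an H-eigenvector of `A` associated with `λ_min(A)`. -/
theorem stmt3 {n k : ℕ} [NeZero k] (hn : 0 < n) (hk : Even k)
    (A : (Fin k → Fin n) → ℝ) (hA : TensorSymm A) :
    IsLeast {r : ℝ | ∃ x : Fin n → ℝ, (∑ i, |x i| ^ k) = 1 ∧ Axk A x = r}
      (tensorLamMin A) ∧
    ∀ x : Fin n → ℝ, (∑ i, |x i| ^ k) = 1 →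
      (Axk A x = tensorLamMin A ↔ IsHEigenpair A (tensorLamMin A) x) := by
  have hk₀ : k ≠ 0 := NeZero.ne k
  have hne : {x : Fin n → ℝ | ∑ i, |x i| ^ k = 1}.Nonempty :=
    ⟨Pi.single ⟨0, hn⟩ 1, by simp [Pi.single_apply, apply_ite, zero_pow hk₀]⟩
  obtain ⟨x₀, hx₀, hmin⟩ :=
    (isCompact_sum_abs_pow_eq_one hk₀).exists_isMinOn hne (continuous_Axk A).continuousOn
  simp only [hk.pow_abs] at hx₀ hmin ⊢
  set m := Axk A x₀
  have hray : ∀ y, m * ∑ i, y i ^ k ≤ Axk A y := mul_sum_pow_le_Axk hk hk₀ fun y hy => hmin hy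
  have heig : ∀ x : Fin n → ℝ, ∑ i, x i ^ k = 1 → Axk A x = m → IsHEigenpair A m x := by
    refine fun x hx hxm => ⟨?_, hA.Axk1_eq_of_mul_sum_pow_le hray (by rw [hx, hxm, mul_one])⟩
    rintro rfl
    simp [zero_pow hk₀] at hx
  have hlam : tensorLamMin A = m :=
    IsLeast.csInf_eq ⟨⟨x₀, heig x₀ hx₀ rfl⟩, fun _ ⟨_, h⟩ => le_of_isHEigenpair hk hray h⟩
  rw [hlam]
  exact ⟨⟨⟨x₀, hx₀, rfl⟩, fun _ ⟨x, hx, hr⟩ => hr ▸ hmin hx⟩,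
    fun x hx => ⟨heig x hx, fun h => by rw [h.Axk_eq, hx, mul_one]⟩⟩
end

section
/- Let G be a k-uniform hypergraph and (λ, x) an eigenpair of the signless Laplacian tensor Q(G). If two vertices u and v satisfy E(u) = E(v) (the same set of incident edges) and λ ≠ d(u), then x_u^k = x_v^k. -/
open Finset

structure UHG (V : Type) [DecidableEq V] [Fintype V] (k : ℕ) where
  edges : Finset (Finset V)
  uniform : ∀ e ∈ edges, e.card = k

namespace UHG

variable {V : Type} [DecidableEq V] [Fintype V] {k : ℕ}

/-- The vertices of the hypergraph: all vertices covered by some edge. -/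
def verts (G : UHG V k) : Finset V := G.edges.biUnion id

/-- The set of edges containing a given vertex. -/
def incEdges (G : UHG V k) (v : V) : Finset (Finset V) :=
  G.edges.filter fun e => v ∈ e

/-- The degree of a vertex. -/
def deg (G : UHG V k) (v : V) : ℕ := (G.incEdges v).card

/-- Two vertices are adjacent if some edge contains both. -/
def Adj (G : UHG V k) (u v : V) : Prop := ∃ e ∈ G.edges, u ∈ e ∧ v ∈ e

/-- A hypergraph is connected if any two of its vertices are joined by a walk. -/
def Connected (G : UHG V k) : Prop :=
  G.verts.Nonempty ∧ ∀ u ∈ G.verts, ∀ v ∈ G.verts, Relation.ReflTransGen G.Adj u v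

/-- A hypergraph is odd-bipartite if there is a set `U` of vertices such that
every edge meets `U` in an odd number of vertices (the bipartition is `{U, V \ U}`). -/
def OddBipartite (G : UHG V k) : Prop :=
  ∃ U : Finset V, ∀ e ∈ G.edges, Odd (e ∩ U).card

/-- The signless Laplacian form `Q(G) x^k = ∑_{e ∈ E} (∑_{v∈e} x_v^k + k ∏_{v∈e} x_v)`. -/
def Qform (G : UHG V k) (x : V → ℝ) : ℝ :=
  ∑ e ∈ G.edges, ((∑ v ∈ e, x v ^ k) + (k : ℝ) * ∏ v ∈ e, x v)

/-- The H-eigenvector equation for the signless Laplacian tensor: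
`(λ - d(v)) x_v^{k-1} = ∑_{e ∋ v} ∏_{w ∈ e \ {v}} x_w` for every vertex `v`. -/
def eigenEq (G : UHG V k) (lam : ℝ) (x : V → ℝ) : Prop :=
  ∀ v : V, (lam - (G.deg v : ℝ)) * x v ^ (k - 1) =
    ∑ e ∈ G.incEdges v, ∏ w ∈ e.erase v, x w

/-- The least H-eigenvalue of the signless Laplacian tensor. -/
noncomputable def lamMin (G : UHG V k) : ℝ :=
  sInf {lam : ℝ | ∃ x : V → ℝ, x ≠ 0 ∧ G.eigenEq lam x}

/-- A first eigenvector: an H-eigenvector associated with the least H-eigenvalue. -/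
def IsFirstEigenvector (G : UHG V k) (x : V → ℝ) : Prop :=
  x ≠ 0 ∧ G.eigenEq G.lamMin x

/-- `G` is the coalescence `G₀(u) ⋄ H(u)`: its edges are the disjoint union of the
edges of `G₀` and `H`, which share only the vertex `u`. -/
def IsCoalescence (G G₀ H : UHG V k) (u : V) : Prop :=
  G.edges = G₀.edges ∪ H.edges ∧ Disjoint G₀.edges H.edges ∧
  G₀.verts ∩ H.verts ⊆ {u} ∧ u ∈ G₀.verts ∧ u ∈ H.verts

end UHG

namespace UHG

/-- The eigenvector equation of the signless Laplacian tensor over `ℂ`: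
`(λ - d(v)) x_v^{k-1} = ∑_{e ∋ v} ∏_{w ∈ e \ {v}} x_w` for every vertex `v`. -/
def eigenEqC {V : Type} [DecidableEq V] [Fintype V] {k : ℕ}
    (G : UHG V k) (lam : ℂ) (x : V → ℂ) : Prop :=
  ∀ v : V, (lam - (G.deg v : ℂ)) * x v ^ (k - 1) =
    ∑ e ∈ G.incEdges v, ∏ w ∈ e.erase v, x w

end UHG

/-- If `(λ, x)` is an eigenpair of `Q(G)`, `u` and `v` have the same set
of incident edges, and `λ ≠ d(u)`, then `x_u^k = x_v^k`. -/
theorem stmt5 {V : Type} [DecidableEq V] [Fintype V] {k : ℕ}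
    (G : UHG V k) (lam : ℂ) (x : V → ℂ) (hx : x ≠ 0) (h : G.eigenEqC lam x)
    (u v : V) (huv : G.incEdges u = G.incEdges v) (hlam : lam ≠ (G.deg u : ℂ)) :
    x u ^ k = x v ^ k := by
  rcases Nat.eq_zero_or_pos k with hk | hk
  · simp [hk]
  have mem_inc : ∀ (a : V) (e : Finset V), e ∈ G.incEdges a → a ∈ e := by
    intro a e he
    exact (Finset.mem_filter.mp he).2
  have step : ∀ a : V, (lam - (G.deg a : ℂ)) * x a ^ k =
      ∑ e ∈ G.incEdges a, ∏ w ∈ e, x w := by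
    intro a
    have := congrArg (· * x a) (h a)
    calc (lam - (G.deg a : ℂ)) * x a ^ k
        = (lam - (G.deg a : ℂ)) * x a ^ (k - 1) * x a := by
          rw [mul_assoc, ← pow_succ]
          congr 2
          omega
      _ = (∑ e ∈ G.incEdges a, ∏ w ∈ e.erase a, x w) * x a := this
      _ = ∑ e ∈ G.incEdges a, ∏ w ∈ e, x w := by
          rw [Finset.sum_mul]
          refine Finset.sum_congr rfl fun e he => ?_
          rw [mul_comm, Finset.mul_prod_erase e x (mem_inc a e he)]
  have hdeg : G.deg u = G.deg v := by
    unfold UHG.deg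
    rw [huv]
  have h1 := step u
  have h2 := step v
  rw [huv] at h1
  rw [← hdeg] at h2
  have : (lam - (G.deg u : ℂ)) * x u ^ k = (lam - (G.deg u : ℂ)) * x v ^ k :=
    h1.trans h2.symm
  exact mul_left_cancel₀ (sub_ne_zero.mpr hlam) this
end

section
/- Let G = G₀(u) ⋄ H(u) be a connected k-uniform hypergraph (k even) with H odd-bipartite with odd-bipartition {U, W}, u ∈ U. Then there exists a first eigenvector x of G that is nonnegative on U and nonpositive on W. -/
open Finset

/-! By Lagrange multipliers, a minimizer `y` of `Q(G)` on `{x | ∑ v, x v ^ k = 1}` satisfies the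
eigenvector equation with eigenvalue `Q(G) y`, and by homogeneity every H-eigenvalue `λ` of an
eigenvector `x` satisfies `λ ∑ x_v^k = Q(G) x`, hence `λ ≥ Q(G) y`: minimizers are first
eigenvectors. Take a minimizer with `y u ≥ 0` and replace it by `|y|` on `U` and by `-|y|` on `W`.
The powers `y_v^k` do not change, nor does anything on the edges of `G₀`, which meet `U ∪ W`
only in `u`. An edge of `H` has `k` (even) vertices and meets `U` oddly, so it meets `W` oddly
and its product becomes `-|∏ y| ≤ ∏ y`. So `Q(G)` does not increase and the new vector is still
a minimizer. -/

namespace UHG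

variable {V : Type} [DecidableEq V] [Fintype V] {k : ℕ}

def kSphere (V : Type) [Fintype V] (k : ℕ) : Set (V → ℝ) := {x | ∑ v, x v ^ k = 1}

omit [DecidableEq V] in
@[simp]
lemma mem_kSphere {x : V → ℝ} : x ∈ kSphere V k ↔ ∑ v, x v ^ k = 1 := Iff.rfl
lemma subset_verts {G : UHG V k} {e : Finset V} (he : e ∈ G.edges) : e ⊆ G.verts :=
  fun _ hv => mem_biUnion.mpr ⟨e, he, hv⟩

lemma pos_of_mem_verts {G : UHG V k} {v : V} (hv : v ∈ G.verts) : 0 < k := by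
  obtain ⟨e, he, hve⟩ := mem_biUnion.mp hv
  exact G.uniform e he ▸ card_pos.mpr ⟨v, hve⟩

lemma sum_incEdges_eq_sum_edges (G : UHG V k) (F : V → Finset V → ℝ) :
    ∑ v, ∑ e ∈ G.incEdges v, F v e = ∑ e ∈ G.edges, ∑ v ∈ e, F v e := by
  simp_rw [incEdges, sum_filter]
  rw [sum_comm]
  exact sum_congr rfl fun e _ => by rw [sum_ite_mem, univ_inter]

lemma eigenEq.mul_sum_pow_eq_Qform {G : UHG V k} (hk0 : 0 < k) {lam : ℝ} {x : V → ℝ}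
    (h : G.eigenEq lam x) : lam * ∑ v, x v ^ k = G.Qform x := by
  have hvertex : ∀ v, lam * x v ^ k =
      ∑ e ∈ G.incEdges v, (x v ^ k + ∏ w ∈ e, x w) := by
    intro v
    have hprod : ∀ e ∈ G.incEdges v, (∏ w ∈ e.erase v, x w) * x v = ∏ w ∈ e, x w :=
      fun e he => (mul_comm _ _).trans (mul_prod_erase e x (mem_filter.mp he).2)
    rw [sum_add_distrib, sum_const, nsmul_eq_mul, ← sum_congr rfl hprod, ← sum_mul,
      ← h v, ← pow_sub_one_mul hk0.ne', deg]
    ring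
  rw [mul_sum, sum_congr rfl fun v _ => hvertex v, sum_incEdges_eq_sum_edges, Qform]
  refine sum_congr rfl fun e he => ?_
  rw [sum_add_distrib, sum_const, nsmul_eq_mul, G.uniform e he]

omit [DecidableEq V] in
lemma sum_smul_pow (t : ℝ) (x : V → ℝ) : ∑ v, (t • x) v ^ k = t ^ k * ∑ v, x v ^ k := by
  simp [mul_pow, mul_sum]

lemma Qform_smul (G : UHG V k) (t : ℝ) (x : V → ℝ) :
    G.Qform (t • x) = t ^ k * G.Qform x := by
  rw [Qform, Qform, mul_sum]
  refine sum_congr rfl fun e he => ?_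
  simp only [Pi.smul_apply, smul_eq_mul, mul_pow, prod_mul_distrib, prod_const, G.uniform e he,
    ← mul_sum]
  ring

open ContinuousLinearMap

noncomputable def sumPowDeriv (k : ℕ) (y : V → ℝ) : (V → ℝ) →L[ℝ] ℝ :=
  ∑ v, ((k : ℝ) * y v ^ (k - 1)) • proj v

noncomputable def QformDeriv (G : UHG V k) (y : V → ℝ) : (V → ℝ) →L[ℝ] ℝ :=
  ∑ e ∈ G.edges, (∑ v ∈ e, ((k : ℝ) * y v ^ (k - 1)) • proj v
    + (k : ℝ) • ∑ v ∈ e, (∏ w ∈ e.erase v, y w) • proj v)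

omit [DecidableEq V] in
lemma hasStrictFDerivAt_sum_pow (y : V → ℝ) :
    HasStrictFDerivAt (fun x : V → ℝ => ∑ v, x v ^ k) (sumPowDeriv k y) y :=
  HasStrictFDerivAt.fun_sum fun v _ =>
    (hasStrictDerivAt_pow k (y v)).comp_hasStrictFDerivAt y (hasStrictFDerivAt_apply v y)

lemma hasStrictFDerivAt_Qform (G : UHG V k) (y : V → ℝ) :
    HasStrictFDerivAt G.Qform (G.QformDeriv y) y :=
  HasStrictFDerivAt.fun_sum fun _ _ =>
    (HasStrictFDerivAt.fun_sum fun v _ => (hasStrictDerivAt_pow k (y v)).comp_hasStrictFDerivAt y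
      (hasStrictFDerivAt_apply v y)).add (hasStrictFDerivAt_finsetProd.const_smul (k : ℝ))

omit [DecidableEq V] in
lemma sumPowDeriv_apply (y z : V → ℝ) : sumPowDeriv k y z = ∑ v, k * y v ^ (k - 1) * z v := by
  simp only [sumPowDeriv, _root_.sum_apply, smul_apply, proj_apply, smul_eq_mul]

lemma sumPowDeriv_single (y : V → ℝ) (v : V) :
    sumPowDeriv k y (Pi.single v 1) = k * y v ^ (k - 1) := by
  simp only [sumPowDeriv, _root_.sum_apply, smul_apply, proj_apply, Pi.single_apply, smul_eq_mul,
    mul_ite, mul_one, mul_zero, sum_ite_eq', mem_univ, if_true]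

lemma QformDeriv_single (G : UHG V k) (y : V → ℝ) (v : V) :
    G.QformDeriv y (Pi.single v 1) =
      k * (G.deg v * y v ^ (k - 1) + ∑ e ∈ G.incEdges v, ∏ w ∈ e.erase v, y w) := by
  simp only [QformDeriv, sum_add_distrib, add_apply, _root_.sum_apply, smul_apply, proj_apply,
    Pi.single_apply, smul_eq_mul, mul_ite, mul_one, mul_zero, sum_ite_eq', deg, incEdges,
    ← sum_filter, sum_const, nsmul_eq_mul, ← mul_sum]
  ring

lemma eigenEq_Qform_of_isMinOn (G : UHG V k) (hk0 : 0 < k) {y : V → ℝ} (hy : y ∈ kSphere V k)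
    (hmin : IsMinOn G.Qform (kSphere V k) y) : G.eigenEq (G.Qform y) y := by
  have hextr : IsLocalExtrOn G.Qform {x | ∑ v, x v ^ k = ∑ v, y v ^ k} y := by
    rw [mem_kSphere.mp hy]
    exact Or.inl hmin.localize
  obtain ⟨a, b, hab, hcomb⟩ := hextr.exists_multipliers_of_hasStrictFDerivAt_1d
    (hasStrictFDerivAt_sum_pow y) (G.hasStrictFDerivAt_Qform y)
  have hdir : ∀ z, a * sumPowDeriv k y z + b * G.QformDeriv y z = 0 := fun z => by
    simpa using congrArg (· z) hcomb
  have hk : (k : ℝ) ≠ 0 := Nat.cast_ne_zero.mpr hk0.ne'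
  have hb : b ≠ 0 := by
    rintro rfl
    have hsum : sumPowDeriv k y y = k := by
      simp only [sumPowDeriv_apply, mul_assoc, pow_sub_one_mul hk0.ne', ← mul_sum]
      rw [mem_kSphere.mp hy, mul_one]
    have ha : a = 0 := by simpa [hsum, hk] using hdir y
    exact hab (by simp [ha])
  have hlam : G.eigenEq (-a / b) y := fun v => by
    have := hdir (Pi.single v 1)
    rw [sumPowDeriv_single, QformDeriv_single] at this
    field_simp
    refine mul_left_cancel₀ hk ?_
    linear_combination -this
  rw [← hlam.mul_sum_pow_eq_Qform hk0, mem_kSphere.mp hy, mul_one]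
  exact hlam

omit [DecidableEq V] in
lemma ne_zero_of_mem_kSphere (hk0 : 0 < k) {x : V → ℝ} (hx : x ∈ kSphere V k) : x ≠ 0 := by
  rintro rfl
  simp [kSphere, zero_pow hk0.ne'] at hx

omit [DecidableEq V] in
lemma sum_pow_pos (hk : Even k) {x : V → ℝ} (hx : x ≠ 0) : 0 < ∑ v, x v ^ k := by
  obtain ⟨v, hv⟩ := Function.ne_iff.mp hx
  exact sum_pos' (fun w _ => hk.pow_nonneg (x w)) ⟨v, mem_univ v, hk.pow_pos hv⟩

omit [DecidableEq V] in
lemma isCompact_kSphere (hk : Even k) (hk0 : 0 < k) : IsCompact (kSphere V k) := by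
  refine (isCompact_closedBall (0 : V → ℝ) 1).of_isClosed_subset (isClosed_eq
    (continuous_finsetSum _ fun v _ => (continuous_apply v).pow k) continuous_const) ?_
  intro x hx
  rw [mem_closedBall_zero_iff, pi_norm_le_iff_of_nonneg zero_le_one]
  intro v
  have hv : |x v| ^ k ≤ 1 := by
    rw [hk.pow_abs, ← mem_kSphere.mp hx]
    exact single_le_sum (fun w _ => hk.pow_nonneg (x w)) (mem_univ v)
  exact (pow_le_one_iff_of_nonneg (abs_nonneg _) hk0.ne').mp hv

lemma continuous_Qform (G : UHG V k) : Continuous G.Qform :=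
  continuous_finsetSum _ fun _ _ =>
    (continuous_finsetSum _ fun v _ => (continuous_apply v).pow k).add
      (continuous_const.mul (continuous_finsetProd _ fun v _ => continuous_apply v))

lemma exists_isMinOn_Qform_nonneg_at (G : UHG V k) (hk : Even k) (hk0 : 0 < k) (u : V) :
    ∃ y ∈ kSphere V k, IsMinOn G.Qform (kSphere V k) y ∧ 0 ≤ y u := by
  have hsingle : Pi.single u 1 ∈ kSphere V k := by
    rw [mem_kSphere, Fintype.sum_eq_single u fun v hv => by simp [hv, zero_pow hk0.ne']]
    simp
  obtain ⟨y, hy, hmin⟩ :=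
    (isCompact_kSphere hk hk0).exists_isMinOn ⟨_, hsingle⟩ G.continuous_Qform.continuousOn
  rcases le_total 0 (y u) with hyu | hyu
  · exact ⟨y, hy, hmin, hyu⟩
  refine ⟨(-1 : ℝ) • y, ?_, fun z hz => ?_, by simpa using hyu⟩
  · rwa [mem_kSphere, sum_smul_pow, hk.neg_one_pow, one_mul]
  · rw [G.Qform_smul, hk.neg_one_pow, one_mul]
    exact hmin hz

lemma Qform_le_of_eigenEq (G : UHG V k) (hk : Even k) (hk0 : 0 < k) {y : V → ℝ}
    (hmin : IsMinOn G.Qform (kSphere V k) y) {lam : ℝ} {x : V → ℝ} (hx : x ≠ 0)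
    (h : G.eigenEq lam x) : G.Qform y ≤ lam := by
  set c := ∑ v, x v ^ k
  have hc : 0 < c := sum_pow_pos hk hx
  set t := c⁻¹ ^ ((k : ℝ)⁻¹)
  have ht : t ^ k = c⁻¹ := Real.rpow_inv_natCast_pow (inv_nonneg.mpr hc.le) hk0.ne'
  have htx : t • x ∈ kSphere V k := by
    rw [mem_kSphere, sum_smul_pow, ht, inv_mul_cancel₀ hc.ne']
  calc G.Qform y ≤ G.Qform (t • x) := hmin htx
    _ = c⁻¹ * (lam * c) := by rw [G.Qform_smul, ht, h.mul_sum_pow_eq_Qform hk0]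
    _ = lam := by field_simp

lemma isFirstEigenvector_of_isMinOn (G : UHG V k) (hk : Even k) (hk0 : 0 < k) {y : V → ℝ}
    (hy : y ∈ kSphere V k) (hmin : IsMinOn G.Qform (kSphere V k) y) :
    G.IsFirstEigenvector y := by
  have hy0 := ne_zero_of_mem_kSphere hk0 hy
  have heig := G.eigenEq_Qform_of_isMinOn hk0 hy hmin
  have hlamMin : G.lamMin = G.Qform y := by
    have hlb : G.Qform y ∈ lowerBounds {lam | ∃ x : V → ℝ, x ≠ 0 ∧ G.eigenEq lam x} :=
      fun _ ⟨_, hx, h⟩ => G.Qform_le_of_eigenEq hk hk0 hmin hx h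
    exact le_antisymm (csInf_le ⟨_, hlb⟩ ⟨y, hy0, heig⟩) (le_csInf ⟨_, y, hy0, heig⟩ hlb)
  exact ⟨hy0, hlamMin ▸ heig⟩

lemma Qform_le_of_pow_eq_of_prod_le (G : UHG V k) {x y : V → ℝ} (hpow : ∀ v, x v ^ k = y v ^ k)
    (hprod : ∀ e ∈ G.edges, ∏ v ∈ e, x v ≤ ∏ v ∈ e, y v) : G.Qform x ≤ G.Qform y :=
  sum_le_sum fun e he => by
    rw [sum_congr rfl fun v _ => hpow v]
    exact add_le_add_right (mul_le_mul_of_nonneg_left (hprod e he) k.cast_nonneg) _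
end UHG

section alignSigns

variable {V : Type} [DecidableEq V] {U W : Finset V} {y : V → ℝ} {v : V}

def alignSigns (U W : Finset V) (y : V → ℝ) (v : V) : ℝ :=
  if v ∈ W then -|y v| else if v ∈ U then |y v| else y v

lemma alignSigns_of_mem_right (hv : v ∈ W) : alignSigns U W y v = -|y v| := if_pos hv

lemma alignSigns_of_mem_left (hUW : Disjoint U W) (hv : v ∈ U) : alignSigns U W y v = |y v| := by
  rw [alignSigns, if_neg (disjoint_left.mp hUW hv), if_pos hv]

lemma alignSigns_of_notMem (hU : v ∉ U) (hW : v ∉ W) : alignSigns U W y v = y v := by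
  rw [alignSigns, if_neg hW, if_neg hU]

lemma alignSigns_pow {k : ℕ} (hk : Even k) : alignSigns U W y v ^ k = y v ^ k := by
  unfold alignSigns
  split_ifs <;> simp only [hk.neg_pow, hk.pow_abs]

lemma odd_card_inter_right {e : Finset V} (he : Even e.card) (hUW : Disjoint U W)
    (heUW : e ⊆ U ∪ W) (hU : Odd (e ∩ U).card) : Odd (e ∩ W).card := by
  have hcard : (e ∩ U).card + (e ∩ W).card = e.card := by
    rw [← card_union_of_disjoint (disjoint_of_subset_left inter_subset_right
      (disjoint_of_subset_right inter_subset_right hUW)), ← inter_union_distrib_left,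
      inter_eq_left.mpr heUW]
  rw [← hcard, Nat.even_add] at he
  rw [← Nat.not_even_iff_odd] at hU ⊢
  exact mt he.mpr hU

lemma prod_alignSigns {e : Finset V} (hUW : Disjoint U W) (heUW : e ⊆ U ∪ W)
    (hodd : Odd (e ∩ W).card) : ∏ v ∈ e, alignSigns U W y v = -|∏ v ∈ e, y v| := by
  have hsign : ∀ v ∈ e, alignSigns U W y v = (if v ∈ W then -1 else 1) * |y v| := by
    intro v hv
    by_cases hW : v ∈ W
    · rw [alignSigns_of_mem_right hW, if_pos hW, neg_one_mul]
    · have hU : v ∈ U := (mem_union.mp (heUW hv)).resolve_right hW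
      rw [alignSigns_of_mem_left hUW hU, if_neg hW, one_mul]
  rw [prod_congr rfl hsign, prod_mul_distrib, prod_ite, prod_const, prod_const, one_pow, mul_one,
    filter_mem_eq_inter, hodd.neg_one_pow, abs_prod, neg_one_mul]

end alignSigns

namespace UHG

variable {V : Type} [DecidableEq V] [Fintype V] {k : ℕ}

lemma prod_alignSigns_le_of_isCoalescence {G G₀ H : UHG V k} {u : V} (hk : Even k)
    (hcoal : G.IsCoalescence G₀ H u) {U W : Finset V} (hUW : U ∪ W = H.verts)
    (hdisj : Disjoint U W) (hu : u ∈ U) (hodd : ∀ e ∈ H.edges, Odd (e ∩ U).card) {y : V → ℝ}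
    (hyu : 0 ≤ y u) : ∀ e ∈ G.edges, ∏ v ∈ e, alignSigns U W y v ≤ ∏ v ∈ e, y v := by
  obtain ⟨hedges, -, hinter, -, -⟩ := hcoal
  intro e he
  rcases mem_union.mp (hedges ▸ he) with he₀ | heH
  · refine (prod_congr rfl fun v hv => ?_).le
    by_cases hvH : v ∈ H.verts
    · obtain rfl : v = u := mem_singleton.mp (hinter (mem_inter.mpr ⟨subset_verts he₀ hv, hvH⟩))
      rw [alignSigns_of_mem_left hdisj hu, abs_of_nonneg hyu]
    · rw [← hUW, mem_union, not_or] at hvH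
      exact alignSigns_of_notMem hvH.1 hvH.2
  · have heUW : e ⊆ U ∪ W := hUW ▸ subset_verts heH
    have hcard : Even e.card := H.uniform e heH ▸ hk
    rw [prod_alignSigns hdisj heUW (odd_card_inter_right hcard hdisj heUW (hodd e heH))]
    exact neg_abs_le _

end UHG

theorem stmt8_general {V : Type} [DecidableEq V] [Fintype V] {k : ℕ}
    (hk : Even k) (G G₀ H : UHG V k) (u : V)
    (hcoal : UHG.IsCoalescence G G₀ H u)
    (U W : Finset V) (hUW : U ∪ W = H.verts) (hdisj : Disjoint U W) (hu : u ∈ U)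
    (hodd : ∀ e ∈ H.edges, Odd (e ∩ U).card) :
    ∃ x : V → ℝ, G.IsFirstEigenvector x ∧
      (∀ v ∈ U, 0 ≤ x v) ∧ (∀ v ∈ W, x v ≤ 0) := by
  have hk0 : 0 < k := UHG.pos_of_mem_verts hcoal.2.2.2.2
  obtain ⟨y, hy, hmin, hyu⟩ := G.exists_isMinOn_Qform_nonneg_at hk hk0 u
  have hpow : ∀ v, alignSigns U W y v ^ k = y v ^ k := fun _ => alignSigns_pow hk
  have hx : alignSigns U W y ∈ UHG.kSphere V k := by
    rwa [UHG.mem_kSphere, sum_congr rfl fun v _ => hpow v]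
  have hxmin : IsMinOn G.Qform (UHG.kSphere V k) (alignSigns U W y) := fun z hz =>
    (G.Qform_le_of_pow_eq_of_prod_le hpow
      (UHG.prod_alignSigns_le_of_isCoalescence hk hcoal hUW hdisj hu hodd hyu)).trans (hmin hz)
  refine ⟨_, G.isFirstEigenvector_of_isMinOn hk hk0 hx hxmin, fun v hv => ?_, fun v hv => ?_⟩
  · rw [alignSigns_of_mem_left hdisj hv]
    exact abs_nonneg _
  · rw [alignSigns_of_mem_right hv]
    exact neg_nonpos.mpr (abs_nonneg _)

/-- Let `G = G₀(u) ⋄ H(u)` be a connected `k`-uniform hypergraph (`k` even)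
with `H` odd-bipartite with odd-bipartition `{U, W}`, `u ∈ U`. Then there exists a first
eigenvector of `G` that is nonnegative on `U` and nonpositive on `W`. -/
theorem stmt8 {V : Type} [DecidableEq V] [Fintype V] {k : ℕ}
    (hk : Even k) (hk0 : 0 < k) (G G₀ H : UHG V k) (u : V)
    (hcoal : UHG.IsCoalescence G G₀ H u) (hconn : G.Connected)
    (U W : Finset V) (hUW : U ∪ W = H.verts) (hdisj : Disjoint U W) (hu : u ∈ U)
    (hodd : ∀ e ∈ H.edges, Odd (e ∩ U).card) :
    ∃ x : V → ℝ, G.IsFirstEigenvector x ∧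
      (∀ v ∈ U, 0 ≤ x v) ∧ (∀ v ∈ W, x v ≤ 0) :=
  stmt8_general hk G G₀ H u hcoal U W hUW hdisj hu hodd
end
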